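/- There does not exist a sequence (g_n) of continuous functions g_n : ℝ² → ℂ, each having no zeros, such that g_n converges to φ uniformly on every compact subset of ℝ². In other words, the function φ cannot be approximated arbitrarily well by zero-free continuous complex-valued functions with respect to local uniform convergence. -/

import Mathlib

open Real Filter

/-- The characteristic function `φ(x,y) = (1/3)(e^{ix} + e^{iy} + e^{i(x+y)})`. -/
noncomputable def phi : ℝ × ℝ → ℂ := fun p =>
  (1 / 3) * (Complex.exp (Complex.I * p.1) + Complex.exp (Complex.I * p.2) +
    Complex.exp (Complex.I * (p.1 + p.2)))

/-!
Since `ℝ²` is simply connected, a zero-free continuous `g` has a continuous logarithm `L`.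
On the boundary of `[0, 2π] × [0, π]`, `φ` is within `2/3` of the unimodular function
`exp (i(x + y))` on the sides `x = 0`, `y = 0`, `x = 2π`, and of `-1` on the side `y = π`.
So if `‖g - φ‖ < 1/3` there, `g` is closer to these models than their modulus, and along each of
the two arcs from `(0, π)` to `(2π, π)` the increment of `L` is that of the model's argument up
to the same principal-log correction. The two increments are `2πi` and `0`.
-/

open Complex Set

theorem exists_continuous_exp_eq {X : Type*} [TopologicalSpace X] [SimplyConnectedSpace X]
    [LocallyPathConnectedSpace X] {f : X → ℂ} (hf : Continuous f) (hf₀ : ∀ x, f x ≠ 0) :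
    ∃ L : X → ℂ, Continuous L ∧ ∀ x, exp (L x) = f x := by
  obtain ⟨x₀⟩ : Nonempty X := inferInstance
  obtain ⟨L, ⟨-, hL⟩, -⟩ := isCoveringMapOn_exp.existsUnique_continuousMap_lifts
    ⟨f, hf⟩ (exp_log (hf₀ x₀)) hf₀
  exact ⟨L, L.continuous, congrFun hL⟩

theorem Complex.div_mem_slitPlane_of_norm_sub_lt {z w : ℂ} (h : ‖z - w‖ < ‖w‖) :
    z / w ∈ slitPlane := by
  have hw : w ≠ 0 := norm_pos_iff.mp ((norm_nonneg _).trans_lt h)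
  refine ball_one_subset_slitPlane ?_
  rwa [mem_ball_iff_norm, ← div_self hw, ← sub_div, norm_div, div_lt_one (norm_pos_iff.mpr hw)]

section Preconnected

variable {X : Type*} [TopologicalSpace X] {S : Set X} {x y : X}

theorem IsPreconnected.sub_eq_sub_of_exp_eq_exp (hS : IsPreconnected S) {f g : X → ℂ}
    (hf : ContinuousOn f S) (hg : ContinuousOn g S) (hfg : ∀ p ∈ S, exp (f p) = exp (g p))
    (hx : x ∈ S) (hy : y ∈ S) : f x - g x = f y - g y := by
  refine hS.constant_of_mapsTo (T := (AddSubgroup.zmultiples (2 * π * I) : Set ℂ))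
    ⟨NormedSpace.discreteTopology_zmultiples _⟩ (hf.sub hg) (fun p hp => ?_) hx hy
  obtain ⟨n, hn⟩ := exp_eq_exp_iff_exists_int.mp (hfg p hp)
  exact ⟨n, by simp [hn]⟩

theorem IsPreconnected.sub_log_exp_eq (hS : IsPreconnected S) {d : X → ℂ}
    (hd : ContinuousOn d S) (hslit : ∀ p ∈ S, exp (d p) ∈ slitPlane) (hx : x ∈ S) (hy : y ∈ S) :
    d x - log (exp (d x)) = d y - log (exp (d y)) :=
  hS.sub_eq_sub_of_exp_eq_exp hd ((continuous_exp.comp_continuousOn hd).clog hslit)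
    (fun _ _ => (exp_log (exp_ne_zero _)).symm) hx hy

/-- Both increments equal that of `L` up to the same principal-log correction. -/
theorem sub_eq_sub_of_norm_exp_sub_lt {S₁ S₂ : Set X} (h₁ : IsPreconnected S₁)
    (h₂ : IsPreconnected S₂) {L ℓ₁ ℓ₂ : X → ℂ} (hL : Continuous L) (hℓ₁ : ContinuousOn ℓ₁ S₁)
    (hℓ₂ : ContinuousOn ℓ₂ S₂) (hclose₁ : ∀ p ∈ S₁, ‖exp (L p) - exp (ℓ₁ p)‖ < ‖exp (ℓ₁ p)‖)
    (hclose₂ : ∀ p ∈ S₂, ‖exp (L p) - exp (ℓ₂ p)‖ < ‖exp (ℓ₂ p)‖)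
    (hx₁ : x ∈ S₁) (hy₁ : y ∈ S₁) (hx₂ : x ∈ S₂) (hy₂ : y ∈ S₂)
    (hx : exp (ℓ₁ x) = exp (ℓ₂ x)) (hy : exp (ℓ₁ y) = exp (ℓ₂ y)) :
    ℓ₁ y - ℓ₁ x = ℓ₂ y - ℓ₂ x := by
  have hslit {S : Set X} {ℓ : X → ℂ} (hclose : ∀ p ∈ S, ‖exp (L p) - exp (ℓ p)‖ < ‖exp (ℓ p)‖) :
      ∀ p ∈ S, exp (L p - ℓ p) ∈ slitPlane := fun p hp => by
    rw [Complex.exp_sub]; exact div_mem_slitPlane_of_norm_sub_lt (hclose p hp)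
  have e₁ := h₁.sub_log_exp_eq (hL.continuousOn.sub hℓ₁) (hslit hclose₁) hx₁ hy₁
  have e₂ := h₂.sub_log_exp_eq (hL.continuousOn.sub hℓ₂) (hslit hclose₂) hx₂ hy₂
  simp only [Pi.sub_apply, Complex.exp_sub, hx, hy] at e₁ e₂
  linear_combination e₁ - e₂

end Preconnected

theorem phi_eq_of_exp_eq_one {x y : ℝ} (h : exp (I * x) = 1 ∨ exp (I * y) = 1) :
    phi (x, y) = (1 + 2 * exp (I * ↑(x + y))) / 3 := by
  simp only [phi, ofReal_add, mul_add, Complex.exp_add]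
  rcases h with h | h <;> rw [h] <;> ring

theorem phi_eq_of_exp_eq_neg_one {x y : ℝ} (h : exp (I * y) = -1) : phi (x, y) = -1 / 3 := by
  simp only [phi, mul_add, Complex.exp_add, h]
  ring

theorem norm_average_sub_exp_le (t : ℝ) :
    ‖(1 + 2 * exp (I * t)) / 3 - exp (I * t)‖ ≤ 2 / 3 := by
  rw [show (1 + 2 * exp (I * t)) / 3 - exp (I * t) = (1 - exp (I * t)) / 3 by ring,
    norm_div, RCLike.norm_ofNat]
  have := (norm_sub_le 1 (exp (I * t))).trans_eq (by rw [norm_one, norm_exp_I_mul_ofReal])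
  linarith

def lowerBoundary : Set (ℝ × ℝ) :=
  {0} ×ˢ Icc 0 π ∪ Icc 0 (2 * π) ×ˢ {0} ∪ {2 * π} ×ˢ Icc 0 π

def topEdge : Set (ℝ × ℝ) := Icc 0 (2 * π) ×ˢ {π}

theorem isPreconnected_lowerBoundary : IsPreconnected lowerBoundary := by
  have h2π : 0 ≤ 2 * π := by positivity
  refine .union (2 * π, 0) (.inr ⟨⟨h2π, le_rfl⟩, rfl⟩) ⟨rfl, le_rfl, pi_pos.le⟩
    (.union (0, 0) ⟨rfl, le_rfl, pi_pos.le⟩ ⟨⟨le_rfl, h2π⟩, rfl⟩ ?_ ?_) ?_ <;>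
    first
    | exact isPreconnected_singleton.prod isPreconnected_Icc
    | exact isPreconnected_Icc.prod isPreconnected_singleton

theorem isPreconnected_topEdge : IsPreconnected topEdge :=
  isPreconnected_Icc.prod isPreconnected_singleton

theorem isCompact_lowerBoundary_union_topEdge : IsCompact (lowerBoundary ∪ topEdge) :=
  (((isCompact_singleton.prod isCompact_Icc).union (isCompact_Icc.prod isCompact_singleton)).union
    (isCompact_singleton.prod isCompact_Icc)).union (isCompact_Icc.prod isCompact_singleton)

theorem phi_eq_on_lowerBoundary {p : ℝ × ℝ} (hp : p ∈ lowerBoundary) :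
    phi p = (1 + 2 * exp (I * ↑(p.1 + p.2))) / 3 := by
  have h2π : exp (I * ↑(2 * π)) = 1 := by
    rw [← exp_two_pi_mul_I]; push_cast; ring_nf
  obtain ⟨x, y⟩ := p
  refine phi_eq_of_exp_eq_one ?_
  rcases hp with (⟨rfl, -⟩ | ⟨-, rfl⟩) | ⟨rfl, -⟩ <;> simp_all

theorem phi_eq_on_topEdge {p : ℝ × ℝ} (hp : p ∈ topEdge) :
    phi p = (1 + 2 * exp (I * π)) / 3 := by
  obtain ⟨x, y⟩ := p
  obtain ⟨-, rfl⟩ := hp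
  have hπ : exp (I * π) = -1 := by rw [mul_comm, exp_pi_mul_I]
  rw [phi_eq_of_exp_eq_neg_one hπ, hπ]
  ring

theorem no_zero_free_approx_phi :
    ¬ ∃ g : ℕ → (ℝ × ℝ) → ℂ,
      (∀ n, Continuous (g n)) ∧
      (∀ n p, g n p ≠ 0) ∧
      (∀ K : Set (ℝ × ℝ), IsCompact K → TendstoUniformlyOn g phi atTop K) := by
  rintro ⟨g, hg, hg₀, hconv⟩
  obtain ⟨n, hn⟩ := ((Metric.tendstoUniformlyOn_iff.mp
    (hconv _ isCompact_lowerBoundary_union_topEdge)) (1 / 3) (by norm_num)).exists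
  obtain ⟨L, hL, hLg⟩ := exists_continuous_exp_eq (hg n) (hg₀ n)
  have hclose {p : ℝ × ℝ} (hp : p ∈ lowerBoundary ∪ topEdge) {t : ℝ}
      (ht : phi p = (1 + 2 * exp (I * t)) / 3) : ‖exp (L p) - exp (I * t)‖ < ‖exp (I * t)‖ := by
    rw [hLg, norm_exp_I_mul_ofReal, ← sub_add_sub_cancel _ (phi p)]
    have := hn p hp
    rw [dist_eq_norm'] at this
    linarith [norm_add_le (g n p - phi p) (phi p - exp (I * t)), ht ▸ norm_average_sub_exp_le t]
  have h2π : 0 ≤ 2 * π := by positivity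
  have key := sub_eq_sub_of_norm_exp_sub_lt isPreconnected_lowerBoundary
    isPreconnected_topEdge hL
    (ℓ₁ := fun p => I * ↑(p.1 + p.2)) (ℓ₂ := fun _ => I * π) (by fun_prop) continuousOn_const
    (fun p hp => hclose (.inl hp) (phi_eq_on_lowerBoundary hp))
    (fun p hp => hclose (.inr hp) (phi_eq_on_topEdge hp))
    (x := (0, π)) (y := (2 * π, π)) (.inl (.inl ⟨rfl, pi_pos.le, le_rfl⟩))
    (.inr ⟨rfl, pi_pos.le, le_rfl⟩) ⟨⟨le_rfl, h2π⟩, rfl⟩ ⟨⟨h2π, le_rfl⟩, rfl⟩ (by simp) ?_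
  · have : 2 * π * I = 0 := by push_cast at key; linear_combination key
    simp [pi_ne_zero] at this
  · exact exp_eq_exp_iff_exists_int.mpr ⟨1, by push_cast; ring⟩
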